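/- Let G be a connected graph with minimum degree at least 3, and let u be a cut vertex of G all of whose incident edges are bridges. Then there exist two distinct neighbors x, y of u and closed non-backtracking walks C_x from x and C_y from y such that C_x never traverses the edge {u,x} and C_y never traverses the edge {u,y}; consequently the walk {u,x} ∘ C_x ∘ {x,u} ∘ {u,y} ∘ C_y ∘ {y,u} is a closed non-backtracking walk from u whose first and last edges are distinct. -/

import Mathlib

/-!
Every vertex other than `u` has at least two neighbours other than `u`, so a non-backtracking walk
started at a neighbour `x` of `u` can be continued forever without visiting `u`. By pigeonhole it
revisits a vertex; cut at the first repetition it is a lollipop, and going up the stem, once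
around the cycle and back down the stem gives a closed non-backtracking walk at `x` avoiding `u`.
Two such walks at distinct neighbours `x ≠ y` of `u` are glued at `u`; no junction backtracks
because the walks avoid `u` and `x ≠ y`.
-/

open SimpleGraph

variable {V : Type*}

/-- A walk is non-backtracking if no vertex equals the vertex two steps later. -/
def NonBacktracking {G : SimpleGraph V} {u v : V} (p : G.Walk u v) : Prop :=
  ∀ i : ℕ, i + 2 < p.support.length → p.support[i]? ≠ p.support[i + 2]?

/-- The weight of a walk: the sum of the weights of its edges, with multiplicity. -/
def walkWeight {G : SimpleGraph V} (F : Sym2 V → ℝ) {u v : V} (p : G.Walk u v) : ℝ :=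
  (p.edges.map F).sum

/-- An edge `e` is revealed by a set `S` of vertices if an integer combination of weights of
closed non-backtracking walks from vertices of `S` equals a nonzero multiple of the weight
of `e`, for every weight function. -/
def RevealedBySet (G : SimpleGraph V) (S : Set V) (e : Sym2 V) : Prop :=
  ∃ (l : ℕ) (w : Fin l → V) (W : ∀ i, G.Walk (w i) (w i)) (c : Fin l → ℤ) (ce : ℤ),
    (∀ i, w i ∈ S) ∧ (∀ i, NonBacktracking (W i)) ∧ (∀ i, c i ≠ 0) ∧ ce ≠ 0 ∧
    ∀ F : Sym2 V → ℝ, ∑ i, (c i : ℝ) * walkWeight F (W i) = (ce : ℝ) * F e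

/-- A walk `W` is revealed by the vertex `v`. -/
def WalkRevealedBy (G : SimpleGraph V) (v : V) {a b : V} (W : G.Walk a b) : Prop :=
  ∃ (l : ℕ) (Ws : Fin l → G.Walk v v) (c : Fin l → ℤ) (cW : ℤ),
    (∀ i, NonBacktracking (Ws i)) ∧ (∀ i, c i ≠ 0) ∧ cW ≠ 0 ∧
    ∀ F : Sym2 V → ℝ, ∑ i, (c i : ℝ) * walkWeight F (Ws i) = (cW : ℝ) * walkWeight F W

/-- `G` is odometric: every edge is revealed by every single vertex. -/
def Odometric (G : SimpleGraph V) : Prop :=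
  ∀ v : V, ∀ e ∈ G.edgeSet, RevealedBySet G {v} e

/-- `u` is a cut vertex of `G`. -/
def IsCutVertex (G : SimpleGraph V) (u : V) : Prop :=
  G.Connected ∧ ¬ (G.induce {x : V | x ≠ u}).Connected

/-- The induced subgraph on `B` is 2-connected. -/
def TwoConnectedOn (G : SimpleGraph V) (B : Set V) : Prop :=
  3 ≤ B.ncard ∧ (G.induce B).Connected ∧ ∀ u ∈ B, (G.induce (B \ {u})).Connected

/-- `B` is a maximal 2-connected block of `G`. -/
def IsBlock (G : SimpleGraph V) (B : Set V) : Prop :=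
  TwoConnectedOn G B ∧ ∀ B', B ⊆ B' → TwoConnectedOn G B' → B' = B

open Walk

section

variable {G : SimpleGraph V}

theorem nonBacktracking_iff_getVert {u v : V} (p : G.Walk u v) :
    NonBacktracking p ↔ ∀ i, i + 2 ≤ p.length → p.getVert i ≠ p.getVert (i + 2) := by
  simp only [NonBacktracking, length_support, Nat.lt_add_one_iff]
  refine forall_congr' fun i => imp_congr_right fun hi => ?_
  rw [← p.getVert_eq_support_getElem? (by omega), ← p.getVert_eq_support_getElem? hi, Ne,
    Option.some_inj]

theorem nonBacktracking_cons_nil {u v : V} (h : G.Adj u v) : NonBacktracking (cons h nil) := by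
  intro i hi
  simp at hi

theorem NonBacktracking.copy {u v u' v' : V} {p : G.Walk u v} (hp : NonBacktracking p)
    (hu : u = u') (hv : v = v') : NonBacktracking (p.copy hu hv) := by
  subst hu hv
  exact hp

theorem NonBacktracking.reverse {u v : V} {p : G.Walk u v} (hp : NonBacktracking p) :
    NonBacktracking p.reverse := by
  rw [nonBacktracking_iff_getVert] at hp ⊢
  intro i hi
  rw [length_reverse] at hi
  have h := hp (p.length - (i + 2)) (by omega)
  rw [show p.length - (i + 2) + 2 = p.length - i by omega] at h
  simpa only [getVert_reverse] using h.symm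

theorem NonBacktracking.append {u v w : V} {p : G.Walk u v} {q : G.Walk v w}
    (hp : NonBacktracking p) (hq : NonBacktracking q) (hpq : p.penultimate ≠ q.snd) :
    NonBacktracking (p.append q) := by
  rw [nonBacktracking_iff_getVert] at hp hq ⊢
  intro i hi
  rw [length_append] at hi
  rcases (by omega : i + 2 ≤ p.length ∨ i + 1 = p.length ∨ p.length ≤ i) with h | h | h
  · rw [getVert_append', getVert_append', if_pos (by omega), if_pos h]
    exact hp i h
  · obtain rfl : i = p.length - 1 := by omega
    rw [getVert_append', getVert_append', if_pos (by omega), if_neg (by omega),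
      show p.length - 1 + 2 - p.length = 1 by omega]
    exact hpq
  · rw [getVert_append, getVert_append, if_neg (by omega), if_neg (by omega),
      show i + 2 - p.length = i - p.length + 2 by omega]
    exact hq _ (by omega)

theorem NonBacktracking.cons {u v w : V} (h : G.Adj u v) {p : G.Walk v w}
    (hp : NonBacktracking p) (hu : u ≠ p.snd) : NonBacktracking (cons h p) := by
  rw [← cons_nil_append]
  exact (nonBacktracking_cons_nil h).append hp hu

theorem NonBacktracking.concat {u v w : V} {p : G.Walk u v} (hp : NonBacktracking p)
    (h : G.Adj v w) (hw : p.penultimate ≠ w) : NonBacktracking (p.concat h) := by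
  rw [concat_eq_append]
  exact hp.append (nonBacktracking_cons_nil h) hw

def SimpleGraph.Walk.excursion {u x : V} (h : G.Adj u x) (c : G.Walk x x) : G.Walk u u :=
  (cons h c).concat h.symm

theorem SimpleGraph.Walk.snd_excursion {u x : V} (h : G.Adj u x) (c : G.Walk x x) :
    (excursion h c).snd = x := by
  rw [excursion, concat_cons, snd, getVert_cons_succ, getVert_zero]

theorem SimpleGraph.Walk.penultimate_excursion {u x : V} (h : G.Adj u x) (c : G.Walk x x) :
    (excursion h c).penultimate = x :=
  penultimate_concat _ _

theorem NonBacktracking.excursion {u x : V} (h : G.Adj u x) {c : G.Walk x x}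
    (hc : NonBacktracking c) (hnil : ¬c.Nil) (hu : u ∉ c.support) :
    NonBacktracking (excursion h c) := by
  refine (hc.cons h fun e => hu ?_).concat h.symm ?_
  · exact e ▸ c.getVert_mem_support 1
  · rw [penultimate_cons_of_not_nil _ _ hnil]
    exact fun e => hu (e ▸ c.getVert_mem_support _)

theorem SimpleGraph.Walk.excursion_append_excursion {u x y : V} (hx : G.Adj u x) (hy : G.Adj u y)
    (cx : G.Walk x x) (cy : G.Walk y y) :
    (excursion hx cx).append (excursion hy cy) =
      cons hx (cx.append (cons hx.symm (cons hy (cy.append (cons hy.symm nil))))) := by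
  rw [excursion, excursion, concat_append, cons_append, concat_eq_append, cons_append]

def SimpleGraph.Walk.ofSeq (f : ℕ → V) (hf : ∀ i, G.Adj (f i) (f (i + 1))) :
    (n : ℕ) → G.Walk (f 0) (f n)
  | 0 => nil
  | n + 1 => (ofSeq f hf n).concat (hf n)

section ofSeq

variable {f : ℕ → V} (hf : ∀ i, G.Adj (f i) (f (i + 1)))

@[simp]
theorem SimpleGraph.Walk.length_ofSeq (n : ℕ) : (ofSeq f hf n).length = n := by
  induction n with
  | zero => rfl
  | succ n ih => rw [ofSeq, length_concat, ih]

theorem SimpleGraph.Walk.getVert_ofSeq {n i : ℕ} (hi : i ≤ n) :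
    (ofSeq f hf n).getVert i = f i := by
  induction n with
  | zero => rw [Nat.le_zero.mp hi]; rfl
  | succ n ih =>
    rw [ofSeq, concat_eq_append, getVert_append', length_ofSeq]
    split_ifs with h
    · exact ih h
    · rw [show i = n + 1 by omega, Nat.add_sub_cancel_left]
      rfl

theorem SimpleGraph.Walk.mem_range_of_mem_support_ofSeq {n : ℕ} {v : V}
    (hv : v ∈ (ofSeq f hf n).support) : v ∈ Set.range f := by
  obtain ⟨i, rfl, hi⟩ := mem_support_iff_exists_getVert.mp hv
  exact ⟨i, (getVert_ofSeq hf (by simpa using hi)).symm⟩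

theorem nonBacktracking_ofSeq (hne : ∀ i, f (i + 2) ≠ f i) (n : ℕ) :
    NonBacktracking (ofSeq f hf n) := by
  rw [nonBacktracking_iff_getVert]
  intro i hi
  rw [length_ofSeq] at hi
  rw [getVert_ofSeq hf (by omega), getVert_ofSeq hf hi]
  exact (hne i).symm

end ofSeq

theorem Finite.exists_lt_map_eq_injOn_Iio {α : Type*} [Finite α] (f : ℕ → α) :
    ∃ j k, j < k ∧ f j = f k ∧ Set.InjOn f (Set.Iio k) := by
  classical
  have hex : ∃ k, ∃ j < k, f j = f k := by
    obtain ⟨a, b, hab, h⟩ := Finite.exists_ne_map_eq_of_infinite f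
    rcases hab.lt_or_gt with hab | hab
    exacts [⟨b, a, hab, h⟩, ⟨a, b, hab, h.symm⟩]
  obtain ⟨j, hjk, hj⟩ := Nat.find_spec hex
  refine ⟨j, Nat.find hex, hjk, hj, fun a ha b hb hab => ?_⟩
  by_contra hne
  rcases Ne.lt_or_gt hne with h | h
  · exact Nat.find_min hex hb ⟨a, h, hab⟩
  · exact Nat.find_min hex ha ⟨b, h, hab.symm⟩

theorem exists_closed_nonBacktracking_of_seq [Finite V] {f : ℕ → V}
    (hf : ∀ i, G.Adj (f i) (f (i + 1))) (hne : ∀ i, f (i + 2) ≠ f i) :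
    ∃ c : G.Walk (f 0) (f 0),
      NonBacktracking c ∧ ¬c.Nil ∧ ∀ v ∈ c.support, v ∈ Set.range f := by
  obtain ⟨j, k, hjk, heq, hinj⟩ := Finite.exists_lt_map_eq_injOn_Iio f
  set back := (ofSeq f hf j).reverse.copy heq rfl
  have hturn : (ofSeq f hf k).penultimate ≠ back.snd := by
    rw [penultimate, snd, getVert_copy, getVert_reverse, length_ofSeq, length_ofSeq,
      getVert_ofSeq hf (by omega), getVert_ofSeq hf (by omega)]
    -- for `j = 0` the walk back is `nil`, and `f (j - 1)` is `f 0 = f k`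
    rcases Nat.eq_zero_or_pos j with rfl | hj
    · rw [heq, ← Nat.sub_add_cancel (by omega : 1 ≤ k)]
      exact (hf (k - 1)).ne
    · exact fun e => (by omega : k - 1 ≠ j - 1)
        (hinj (Set.mem_Iio.mpr (by omega)) (Set.mem_Iio.mpr (by omega)) e)
  refine ⟨(ofSeq f hf k).append back, (nonBacktracking_ofSeq hf hne k).append
    ((nonBacktracking_ofSeq hf hne j).reverse.copy heq rfl) hturn, ?_, fun v hv => ?_⟩
  · rw [not_nil_iff_lt_length, length_append, length_ofSeq]
    omega
  · rcases (mem_support_append_iff _ _).mp hv with hv | hv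
    · exact mem_range_of_mem_support_ofSeq hf hv
    · rw [support_copy, support_reverse, List.mem_reverse] at hv
      exact mem_range_of_mem_support_ofSeq hf hv

def twoStepSeq (next : V → V → V) (x y : V) : ℕ → V
  | 0 => x
  | 1 => y
  | n + 2 => next (twoStepSeq next x y (n + 1)) (twoStepSeq next x y n)

theorem exists_closed_nonBacktracking_walk [Finite V] {S : Set V}
    (hS : ∀ v ∈ S, ∀ w, ∃ v' ∈ S, G.Adj v v' ∧ v' ≠ w) {x : V} (hx : x ∈ S) :
    ∃ c : G.Walk x x, NonBacktracking c ∧ ¬c.Nil ∧ ∀ v ∈ c.support, v ∈ S := by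
  obtain ⟨y, hy, hxy, -⟩ := hS x hx x
  choose! next hnext_mem hnext_adj hnext_ne using hS
  set f := twoStepSeq next x y
  have hmem : ∀ n, f n ∈ S ∧ f (n + 1) ∈ S := by
    intro n
    induction n with
    | zero => exact ⟨hx, hy⟩
    | succ n ih => exact ⟨ih.2, hnext_mem _ ih.2 _⟩
  have hadj : ∀ n, G.Adj (f n) (f (n + 1))
    | 0 => hxy
    | n + 1 => hnext_adj _ (hmem n).2 _
  obtain ⟨c, hc, hnil, hcS⟩ :=
    exists_closed_nonBacktracking_of_seq hadj fun n => hnext_ne _ (hmem n).2 _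
  refine ⟨c, hc, hnil, fun v hv => ?_⟩
  obtain ⟨n, rfl⟩ := hcS v hv
  exact (hmem n).1

theorem exists_adj_ne_ne_of_three_le_degree {v : V} [Fintype (G.neighborSet v)]
    (hv : 3 ≤ G.degree v) (a b : V) : ∃ c, G.Adj v c ∧ c ≠ a ∧ c ≠ b := by
  classical
  obtain ⟨c, hc⟩ : (G.neighborFinset v \ {a, b}).Nonempty := by
    rw [← Finset.card_pos]
    have := Finset.le_card_sdiff {a, b} (G.neighborFinset v)
    have := Finset.card_le_two (a := a) (b := b)
    rw [card_neighborFinset_eq_degree] at *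
    omega
  simp only [Finset.mem_sdiff, mem_neighborFinset, Finset.mem_insert, Finset.mem_singleton,
    not_or] at hc
  exact ⟨c, hc.1, hc.2.1, hc.2.2⟩

end

theorem cut_vertex_all_bridges_walk_general {G : SimpleGraph V} [Fintype V] [DecidableRel G.Adj]
    (hdeg : ∀ x, 3 ≤ G.degree x)
    (u : V) :
    ∃ (x y : V) (hx : G.Adj u x) (hy : G.Adj u y), x ≠ y ∧
      ∃ (Cx : G.Walk x x) (Cy : G.Walk y y),
        NonBacktracking Cx ∧ NonBacktracking Cy ∧
        s(u, x) ∉ Cx.edges ∧ s(u, y) ∉ Cy.edges ∧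
        ∃ C : G.Walk u u,
          C = SimpleGraph.Walk.cons hx (Cx.append (SimpleGraph.Walk.cons hx.symm
                (SimpleGraph.Walk.cons hy (Cy.append
                  (SimpleGraph.Walk.cons hy.symm SimpleGraph.Walk.nil))))) ∧
          NonBacktracking C ∧ C.edges.head? ≠ C.edges.getLast? := by
  have hS : ∀ v ∈ {v | v ≠ u}, ∀ w, ∃ v' ∈ {v | v ≠ u}, G.Adj v v' ∧ v' ≠ w := by
    intro v _ w
    obtain ⟨v', hadj, hw, hu⟩ := exists_adj_ne_ne_of_three_le_degree (hdeg v) w u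
    exact ⟨v', hu, hadj, hw⟩
  obtain ⟨x, hx⟩ := (G.degree_pos_iff_exists_adj u).mp (by linarith [hdeg u])
  obtain ⟨y, hy, hyx, -⟩ := exists_adj_ne_ne_of_three_le_degree (hdeg u) x x
  obtain ⟨Cx, hCx, hCx_nil, hCx_u⟩ := exists_closed_nonBacktracking_walk hS hx.ne'
  obtain ⟨Cy, hCy, hCy_nil, hCy_u⟩ := exists_closed_nonBacktracking_walk hS hy.ne'
  have hux : u ∉ Cx.support := fun h => hCx_u u h rfl
  have huy : u ∉ Cy.support := fun h => hCy_u u h rfl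
  refine ⟨x, y, hx, hy, hyx.symm, Cx, Cy, hCx, hCy,
    fun h => hux (Cx.fst_mem_support_of_mem_edges h),
    fun h => huy (Cy.fst_mem_support_of_mem_edges h), _, rfl, ?_, ?_⟩
  · rw [← excursion_append_excursion]
    exact (hCx.excursion hx hCx_nil hux).append (hCy.excursion hy hCy_nil huy)
      (by rw [penultimate_excursion, snd_excursion]; exact hyx.symm)
  · simp [List.getLast?_cons, List.getLast?_append, hx.ne', hyx.symm]

/-- if `u` is a cut vertex all of whose incident edges are bridges in a connected
graph of minimum degree at least 3, then `u` has two distinct neighbors `x`, `y` admitting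
closed non-backtracking walks `Cx` (from `x`, avoiding `{u,x}`) and `Cy` (from `y`, avoiding
`{u,y}`), so that `{u,x} ∘ Cx ∘ {x,u} ∘ {u,y} ∘ Cy ∘ {y,u}` is a closed non-backtracking walk
from `u` with distinct first and last edges. -/
theorem cut_vertex_all_bridges_walk {G : SimpleGraph V} [Fintype V] [DecidableRel G.Adj]
    (hconn : G.Connected) (hdeg : ∀ x, 3 ≤ G.degree x)
    (u : V) (hcut : IsCutVertex G u) (hbr : ∀ w : V, G.Adj u w → G.IsBridge s(u, w)) :
    ∃ (x y : V) (hx : G.Adj u x) (hy : G.Adj u y), x ≠ y ∧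
      ∃ (Cx : G.Walk x x) (Cy : G.Walk y y),
        NonBacktracking Cx ∧ NonBacktracking Cy ∧
        s(u, x) ∉ Cx.edges ∧ s(u, y) ∉ Cy.edges ∧
        ∃ C : G.Walk u u,
          C = SimpleGraph.Walk.cons hx (Cx.append (SimpleGraph.Walk.cons hx.symm
                (SimpleGraph.Walk.cons hy (Cy.append
                  (SimpleGraph.Walk.cons hy.symm SimpleGraph.Walk.nil))))) ∧
          NonBacktracking C ∧ C.edges.head? ≠ C.edges.getLast? :=
  cut_vertex_all_bridges_walk_general hdeg u
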